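/- arXiv:2205.09558 — 2 statements merged into one kernel-verified Lean document; each statement's English description precedes it below -/
import Mathlib

section
/- Let θ ∈ ℝ² be a unit vector, K > 1, and ξ ∈ ℝ² with ξ·θ < 0. Define ω₂ = |ξ|²/( -ξ·θ + √((ξ·θ)² + |ξ|²(K²-1)) ) and ζ₂ = ((-ξ·θ + √((ξ·θ)² + |ξ|²(K²-1)))/|ξ|²)·(ξ/K) + θ/K. Then ω₂ > 0, |ζ₂| = 1, and ξ = ω₂(Kζ₂ - θ). -/
/-! With `c = 1 / ω₂`, the identity `ξ = ω₂ (K ζ₂ - θ)` says `ζ₂ = K⁻¹ (c ξ + θ)`, so `|ζ₂| = 1`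
amounts to `‖c ξ + θ‖² = K²`. Expanding, `t = c ‖ξ‖²` must solve `t² + 2 ⟪ξ, θ⟫ t = ‖ξ‖² (K² - 1)`,
and `-⟪ξ, θ⟫ + √(⟪ξ, θ⟫² + ‖ξ‖² (K² - 1))` is the positive root of this quadratic. -/

open RealInnerProductSpace

theorem neg_add_sqrt_sq_add_pos {a b : ℝ} (ha : a < 0) : 0 < -a + √(a ^ 2 + b) := by
  linarith [Real.sqrt_nonneg (a ^ 2 + b)]

theorem neg_add_sqrt_sq_add_isRoot {a b : ℝ} (hb : 0 ≤ b) :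
    (-a + √(a ^ 2 + b)) ^ 2 + 2 * a * (-a + √(a ^ 2 + b)) = b := by
  linear_combination Real.sq_sqrt (by positivity : 0 ≤ a ^ 2 + b)

section InnerProductSpace

variable {E : Type*} [NormedAddCommGroup E] [InnerProductSpace ℝ E]

theorem norm_div_sq_smul_add_sq {ξ θ : E} (hξ : ξ ≠ 0) (hθ : ‖θ‖ = 1) {t b : ℝ}
    (ht : t ^ 2 + 2 * ⟪ξ, θ⟫ * t = ‖ξ‖ ^ 2 * b) :
    ‖(t / ‖ξ‖ ^ 2) • ξ + θ‖ ^ 2 = b + 1 := by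
  have hξ2 : ‖ξ‖ ^ 2 ≠ 0 := by positivity
  rw [norm_add_sq_real, norm_smul, real_inner_smul_left, hθ, mul_pow, Real.norm_eq_abs, sq_abs]
  field_simp
  linear_combination ht

theorem smul_smul_inv_smul_add_inv_smul_sub {K : ℝ} (hK : K ≠ 0) (c : ℝ) (ξ θ : E) :
    K • (c • (K⁻¹ • ξ) + K⁻¹ • θ) - θ = c • ξ := by
  rw [smul_add, smul_inv_smul₀ hK, smul_comm, smul_inv_smul₀ hK, add_sub_cancel_right]

end InnerProductSpace

theorem stmt_2 (θ ξ : EuclideanSpace ℝ (Fin 2)) (K : ℝ) (hθ : ‖θ‖ = 1) (hK : 1 < K)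
    (hξθ : (inner ℝ ξ θ : ℝ) < 0) :
    0 < ‖ξ‖ ^ 2 / (-(inner ℝ ξ θ : ℝ) + Real.sqrt ((inner ℝ ξ θ : ℝ) ^ 2 + ‖ξ‖ ^ 2 * (K ^ 2 - 1))) ∧
    ‖(((-(inner ℝ ξ θ : ℝ) + Real.sqrt ((inner ℝ ξ θ : ℝ) ^ 2 + ‖ξ‖ ^ 2 * (K ^ 2 - 1))) / ‖ξ‖ ^ 2) •
        (K⁻¹ • ξ) + K⁻¹ • θ : EuclideanSpace ℝ (Fin 2))‖ = 1 ∧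
    ξ = (‖ξ‖ ^ 2 / (-(inner ℝ ξ θ : ℝ) + Real.sqrt ((inner ℝ ξ θ : ℝ) ^ 2 + ‖ξ‖ ^ 2 * (K ^ 2 - 1)))) •
      (K • (((-(inner ℝ ξ θ : ℝ) + Real.sqrt ((inner ℝ ξ θ : ℝ) ^ 2 + ‖ξ‖ ^ 2 * (K ^ 2 - 1))) / ‖ξ‖ ^ 2) •
        (K⁻¹ • ξ) + K⁻¹ • θ) - θ) := by
  have hξ : ξ ≠ 0 := by rintro rfl; simp at hξθ
  have hξ2 : 0 < ‖ξ‖ ^ 2 := by positivity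
  have hK0 : 0 < K := by linarith
  have hs := neg_add_sqrt_sq_add_pos (b := ‖ξ‖ ^ 2 * (K ^ 2 - 1)) hξθ
  set s := -(inner ℝ ξ θ : ℝ) + √((inner ℝ ξ θ : ℝ) ^ 2 + ‖ξ‖ ^ 2 * (K ^ 2 - 1))
  have hroot : s ^ 2 + 2 * ⟪ξ, θ⟫ * s = ‖ξ‖ ^ 2 * (K ^ 2 - 1) :=
    neg_add_sqrt_sq_add_isRoot (mul_nonneg hξ2.le (by nlinarith))
  have hnorm : ‖(s / ‖ξ‖ ^ 2) • ξ + θ‖ = K := by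
    rw [← pow_left_inj₀ (norm_nonneg _) hK0.le two_ne_zero, norm_div_sq_smul_add_sq hξ hθ hroot]
    ring
  refine ⟨div_pos hξ2 hs, ?_, ?_⟩
  · rw [smul_comm, ← smul_add, norm_smul, hnorm, Real.norm_of_nonneg (inv_nonneg.2 hK0.le),
      inv_mul_cancel₀ hK0.ne']
  · rw [smul_smul_inv_smul_add_inv_smul_sub hK0.ne', smul_smul, div_mul_div_cancel₀ hs.ne',
      div_self hξ2.ne', one_smul]
end

section
/- Let θ ∈ ℝ² be a unit vector, K > 1, and ξ ∈ ℝ² with ξ·θ < 0. Let ζ₁ = θ - (2(ξ·θ)/|ξ|²)ξ and ζ₂ = the unit vector with ξ = ω₂(Kζ₂ - θ) for the unique ω₂ > 0. Then ζ₁·ζ₂ ≥ 1/K; in particular ζ₁·ζ₂ ≠ 0. -/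
/-!
Expanding the inner product gives `⟪ζ₁, ζ₂⟫ = K⁻¹ (1 - ⟪ξ, θ⟫ (⟪ξ, θ⟫ + s) / ‖ξ‖²)` with
`s = √(⟪ξ, θ⟫² + ‖ξ‖² (K² - 1)) ≥ |⟪ξ, θ⟫|`. As `⟪ξ, θ⟫ < 0 ≤ ⟪ξ, θ⟫ + s`, the subtracted term is
nonpositive, so the bracket is at least `1`.
-/

open RealInnerProductSpace

section InnerProductSpace

variable {E : Type*} [NormedAddCommGroup E] [InnerProductSpace ℝ E]

theorem inner_reflection_smul_add {θ : E} (hθ : ‖θ‖ = 1) (ξ : E) (c : ℝ) :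
    ⟪θ - (2 * ⟪ξ, θ⟫ / ‖ξ‖ ^ 2) • ξ, c • ξ + θ⟫
      = 1 - c * ⟪ξ, θ⟫ - 2 * ⟪ξ, θ⟫ ^ 2 / ‖ξ‖ ^ 2 := by
  rcases eq_or_ne ξ 0 with rfl | hξ
  · simp [hθ]
  have hr : ‖ξ‖ ^ 2 ≠ 0 := by positivity
  simp only [inner_sub_left, inner_add_right, real_inner_smul_left, real_inner_smul_right,
    real_inner_self_eq_norm_sq, hθ, real_inner_comm ξ θ]
  field_simp
  ring

end InnerProductSpace

theorem one_le_one_sub_div_mul_sub_div {a r t : ℝ} (ha : a ≤ 0) (hr : 0 < r) (ht : 0 ≤ t) :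
    1 ≤ 1 - (-a + √(a ^ 2 + t)) / r * a - 2 * a ^ 2 / r := by
  have hs : -a ≤ √(a ^ 2 + t) := (neg_le_abs a).trans (Real.abs_le_sqrt (by linarith))
  have hrewrite : 1 - (-a + √(a ^ 2 + t)) / r * a - 2 * a ^ 2 / r
      = 1 + (-a) * (a + √(a ^ 2 + t)) / r := by
    field_simp
    ring
  rw [hrewrite, le_add_iff_nonneg_right]
  exact div_nonneg (mul_nonneg (neg_nonneg.mpr ha) (by linarith)) hr.le

theorem stmt_4 (θ ξ : EuclideanSpace ℝ (Fin 2)) (K : ℝ) (hθ : ‖θ‖ = 1) (hK : 1 < K)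
    (hξθ : (inner ℝ ξ θ : ℝ) < 0) :
    let ω₂ : ℝ := ‖ξ‖ ^ 2 / (-(inner ℝ ξ θ : ℝ) + Real.sqrt ((inner ℝ ξ θ : ℝ) ^ 2 + ‖ξ‖ ^ 2 * (K ^ 2 - 1)))
    let ζ₁ : EuclideanSpace ℝ (Fin 2) := θ - (2 * (inner ℝ ξ θ : ℝ) / ‖ξ‖ ^ 2) • ξ
    let ζ₂ : EuclideanSpace ℝ (Fin 2) := K⁻¹ • (ω₂⁻¹ • ξ + θ)
    (inner ℝ ζ₁ ζ₂ : ℝ) ≥ 1 / K ∧ (inner ℝ ζ₁ ζ₂ : ℝ) ≠ 0 := by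
  intro ω₂ ζ₁ ζ₂
  have hξ : ξ ≠ 0 := by
    rintro rfl
    simp at hξθ
  have hK0 : 0 < K := by linarith
  have hbracket : 1 ≤ 1 - ω₂⁻¹ * ⟪ξ, θ⟫ - 2 * ⟪ξ, θ⟫ ^ 2 / ‖ξ‖ ^ 2 := by
    rw [inv_div]
    exact one_le_one_sub_div_mul_sub_div hξθ.le (by positivity)
      (mul_nonneg (by positivity) (by nlinarith))
  have hinner : ⟪ζ₁, ζ₂⟫ = K⁻¹ * (1 - ω₂⁻¹ * ⟪ξ, θ⟫ - 2 * ⟪ξ, θ⟫ ^ 2 / ‖ξ‖ ^ 2) := by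
    rw [real_inner_smul_right, inner_reflection_smul_add hθ]
  have hge : 1 / K ≤ ⟪ζ₁, ζ₂⟫ := by
    rw [hinner, one_div]
    exact le_mul_of_one_le_right (by positivity) hbracket
  exact ⟨hge, ((one_div_pos.mpr hK0).trans_le hge).ne'⟩
end
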